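/- arXiv:2108.10592 — 3 statements merged into one kernel-verified Lean document; each statement's English description precedes it below -/
import Mathlib

section
/- Let C be the category with four objects M, M₊, M₋, M_h and four non-identity morphisms i₊ : M₊ → M, i₋ : M₋ → M, j₊ : M₊ → M_h, j₋ : M₋ → M_h (and no nontrivial compositions). Let BZ be the one-object groupoid with morphism group ℤ. Define the functor L : C → BZ sending every object to the unique object, sending i₋ to 1 and i₊, j₊, j₋ to 0. Then L exhibits BZ as the localization of C at all of its morphisms: L sends all morphisms to isomorphisms, and for every category D and functor F : C → D sending all morphisms to isomorphisms there exists a functor F' : BZ → D and a natural isomorphism F' ∘ L ≅ F. -/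
/-!
If `F` inverts every arrow, transport along the zig-zag `M ← M₊ → M_h ← M₋` identifies every
`F x` with `F M`; going out along the zig-zag and back along `i₋` gives an automorphism `g` of
`F M`, and `n ↦ gⁿ` is a functor `BZ ⥤ D` which restricts along `L` to `F` up to these
identifications. As `C` is free, naturality only has to be checked on the four generating
arrows, and there it holds by construction of `g`.
-/

open CategoryTheory

/-- Objects of the zig-zag quiver. -/
inductive ZZObj : Type
  | M | Mp | Mm | Mh

/-- Arrows of the zig-zag quiver: `i₊ : M₊ → M`, `i₋ : M₋ → M`, `j₊ : M₊ → M_h`,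
`j₋ : M₋ → M_h`. -/
inductive ZZArr : ZZObj → ZZObj → Type
  | ip : ZZArr .Mp .M
  | im : ZZArr .Mm .M
  | jp : ZZArr .Mp .Mh
  | jm : ZZArr .Mm .Mh

instance : Quiver ZZObj := ⟨ZZArr⟩

/-- The zig-zag category `C`: the free category (category of paths) on the zig-zag quiver. -/
abbrev ZZCat : Type := Paths ZZObj

/-- The value of the localization functor on generating arrows: `i₋ ↦ 1`, the rest `↦ 0`. -/
def ZZArr.toInt : ∀ {a b : ZZObj}, ZZArr a b → ℤ
  | _, _, .im => 1
  | _, _, _ => 0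

/-- The localization functor `L : C ⥤ BZ`. -/
def Lzz : ZZCat ⥤ SingleObj (Multiplicative ℤ) :=
  Paths.lift
    { obj := fun _ => SingleObj.star (Multiplicative ℤ)
      map := fun f => Multiplicative.ofAdd f.toInt }

@[simp]
lemma CategoryTheory.Aut.one_hom {C : Type*} [Category C] (X : C) : (1 : Aut X).hom = 𝟙 X :=
  rfl

namespace CategoryTheory.SingleObj

def zpowersFunctor {D : Type*} [Category D] {X : D} (g : Aut X) :
    SingleObj (Multiplicative ℤ) ⥤ D :=
  SingleObj.functor ((Aut.toEnd X).comp (zpowersHom _ g))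

end CategoryTheory.SingleObj

lemma Lzz_map_of {a b : ZZObj} (e : ZZArr a b) :
    Lzz.map ((Paths.of ZZObj).map e) = Multiplicative.ofAdd e.toInt :=
  Paths.lift_toPath _ _

namespace Lzz

open SingleObj ZZObj ZZArr

variable {D : Type*} [Category D] {F : ZZCat ⥤ D}
  (hF : ∀ {a b : ZZCat} (f : a ⟶ b), IsIso (F.map f))

noncomputable def arrowIso {a b : ZZObj} (e : ZZArr a b) :
    F.obj ((Paths.of ZZObj).obj a) ≅ F.obj ((Paths.of ZZObj).obj b) :=
  haveI := hF ((Paths.of ZZObj).map e)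
  asIso (F.map ((Paths.of ZZObj).map e))

noncomputable def zigzagIso :
    ∀ x : ZZObj, F.obj ((Paths.of ZZObj).obj M) ≅ F.obj ((Paths.of ZZObj).obj x)
  | M => Iso.refl _
  | Mp => (arrowIso hF ip).symm
  | Mh => (arrowIso hF ip).symm ≪≫ arrowIso hF jp
  | Mm => (arrowIso hF ip).symm ≪≫ arrowIso hF jp ≪≫ (arrowIso hF jm).symm

noncomputable def zigzagLoop : Aut (F.obj ((Paths.of ZZObj).obj M)) :=
  zigzagIso hF Mm ≪≫ arrowIso hF im

lemma zigzagIso_naturality {a b : ZZObj} (e : ZZArr a b) :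
    (zigzagLoop hF ^ e.toInt).hom ≫ (zigzagIso hF b).hom =
      (zigzagIso hF a).hom ≫ (arrowIso hF e).hom := by
  cases e <;> simp only [ZZArr.toInt, zpow_zero, zpow_one] <;> simp [zigzagIso, zigzagLoop]

noncomputable def lift : SingleObj (Multiplicative ℤ) ⥤ D :=
  zpowersFunctor (zigzagLoop hF)

noncomputable def fac : Lzz ⋙ lift hF ≅ F :=
  Paths.liftNatIso (zigzagIso hF) fun e => by
    change (lift hF).map (Lzz.map ((Paths.of ZZObj).map e)) ≫ _ = _
    rw [Lzz_map_of]
    exact zigzagIso_naturality hF e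

end Lzz

theorem Lzz_is_localization_at_all_morphisms :
    (∀ {a b : ZZCat} (f : a ⟶ b), IsIso (Lzz.map f)) ∧
    (∀ (D : Type u) [Category.{v} D] (F : ZZCat ⥤ D),
      (∀ {a b : ZZCat} (f : a ⟶ b), IsIso (F.map f)) →
      ∃ F' : SingleObj (Multiplicative ℤ) ⥤ D, Nonempty (Lzz ⋙ F' ≅ F)) :=
  ⟨fun _ => inferInstance, fun _ _ _ hF => ⟨Lzz.lift hF, ⟨Lzz.fac hF⟩⟩⟩
end

section
/- With C, BZ, and L : C → BZ as above, the precomposition functor L* : Fun(BZ, D) → Fun(C, D), G ↦ G ∘ L, is fully faithful for every category D. -/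
/-!
Every arrow of the zig-zag except `i₋` is sent by `L` to the identity, and the zig-zag is connected,
so all components of a natural transformation `α : G ∘ L ⟶ G' ∘ L` are one morphism `c`. Naturality
at `i₋` says that `c` intertwines `G 1` and `G' 1`; the elements intertwined by `c` form a subgroup,
and `1` generates `ℤ`, so `c` is a natural transformation `G ⟶ G'`, whose whiskering is `α`.
Faithfulness holds because `L` is surjective on objects.
-/

open CategoryTheory

namespace CategoryTheory.SingleObj

variable {M : Type*} [Group M] {D : Type*} [Category D]

def intertwiningSubgroup (G G' : SingleObj M ⥤ D) (c : G.obj (star M) ⟶ G'.obj (star M)) :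
    Subgroup M where
  carrier := {g | G.map g ≫ c = c ≫ G'.map g}
  one_mem' := by
    change G.map (𝟙 _) ≫ c = c ≫ G'.map (𝟙 _)
    simp
  mul_mem' {a b} ha hb := by
    rw [Set.mem_ofPred_eq, ← comp_as_mul (x := star M) (y := star M) (z := star M), G.map_comp,
      G'.map_comp, Category.assoc, ha, reassoc_of% hb]
  inv_mem' {a} ha := by
    rw [Set.mem_ofPred_eq, ← inv_as_inv (x := star M) (y := star M), G.map_inv, G'.map_inv,
      IsIso.inv_comp_eq, reassoc_of% ha, IsIso.hom_inv_id, Category.comp_id]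

theorem map_comp_eq_comp_map_of_zpowers_eq_top {x : M} (hx : Subgroup.zpowers x = ⊤)
    {G G' : SingleObj M ⥤ D} {c : G.obj (star M) ⟶ G'.obj (star M)}
    (h : G.map x ≫ c = c ≫ G'.map x) (g : M) : G.map g ≫ c = c ≫ G'.map g :=
  (Subgroup.zpowers_le (H := intertwiningSubgroup G G' c)).2 h (hx ▸ Subgroup.mem_top g)

theorem functor_map_one (G : SingleObj M ⥤ D) : G.map (1 : M) = 𝟙 (G.obj (star M)) :=
  G.map_id _

end CategoryTheory.SingleObj

theorem Multiplicative.zpowers_ofAdd_one : Subgroup.zpowers (ofAdd (1 : ℤ)) = ⊤ := by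
  refine (Subgroup.eq_top_iff' _).2 fun g => Subgroup.mem_zpowers_iff.2 ⟨g.toAdd, ?_⟩
  simp [← ofAdd_zsmul]

open SingleObj

namespace Lzz

theorem map_of_map {a b : ZZObj} (f : a ⟶ b) :
    Lzz.map ((Paths.of ZZObj).map f) = Multiplicative.ofAdd (ZZArr.toInt f) :=
  Paths.lift_toPath _ f

variable {D : Type*} [Category D] {G G' : SingleObj (Multiplicative ℤ) ⥤ D}
  (α : Lzz ⋙ G ⟶ Lzz ⋙ G')

theorem app_eq_app_of_toInt_eq_zero {a b : ZZObj} (f : a ⟶ b) (hf : ZZArr.toInt f = 0) :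
    (α.app ((Paths.of ZZObj).obj a) : G.obj (star _) ⟶ G'.obj (star _)) =
      α.app ((Paths.of ZZObj).obj b) := by
  have h := α.naturality ((Paths.of ZZObj).map f)
  rw [Functor.comp_map, Functor.comp_map, map_of_map, hf, ofAdd_zero, functor_map_one,
    functor_map_one] at h
  exact (Category.comp_id _).symm.trans (h.symm.trans (Category.id_comp _))

theorem app_eq_app_M (x : ZZObj) :
    (α.app ((Paths.of ZZObj).obj x) : G.obj (star _) ⟶ G'.obj (star _)) =
      α.app ((Paths.of ZZObj).obj .M) := by
  have hp := app_eq_app_of_toInt_eq_zero α .ip rfl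
  have hjp := app_eq_app_of_toInt_eq_zero α .jp rfl
  have hjm := app_eq_app_of_toInt_eq_zero α .jm rfl
  cases x
  · rfl
  · exact hp
  · rw [hjm, ← hjp, hp]
  · rw [← hjp, hp]

theorem map_ofAdd_one_comp_app_M :
    G.map (Multiplicative.ofAdd 1) ≫ α.app ((Paths.of ZZObj).obj .M) =
      α.app ((Paths.of ZZObj).obj .M) ≫ G'.map (Multiplicative.ofAdd 1) := by
  have h := α.naturality ((Paths.of ZZObj).map ZZArr.im)
  rw [Functor.comp_map, Functor.comp_map, map_of_map, app_eq_app_M α .Mm] at h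
  exact h

end Lzz

theorem precomposition_with_Lzz_fully_faithful
    (D : Type u) [Category.{v} D] :
    ((Functor.whiskeringLeft ZZCat (SingleObj (Multiplicative ℤ)) D).obj Lzz).Full ∧
    ((Functor.whiskeringLeft ZZCat (SingleObj (Multiplicative ℤ)) D).obj Lzz).Faithful := by
  refine ⟨⟨fun α => ?_⟩, ⟨fun h => ?_⟩⟩
  · have hα := map_comp_eq_comp_map_of_zpowers_eq_top Multiplicative.zpowers_ofAdd_one
      (Lzz.map_ofAdd_one_comp_app_M α)
    exact ⟨SingleObj.natTrans _ hα, by ext x; exact (Lzz.app_eq_app_M α x).symm⟩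
  · exact NatTrans.ext (funext fun _ => NatTrans.congr_app h ((Paths.of ZZObj).obj .M))
end

section
/- Let D be any category and F : C → D a functor from the zig-zag category C (as above) that sends every morphism to an isomorphism. Define F'(1) := F(i₋) ∘ F(j₋)⁻¹ ∘ F(j₊) ∘ F(i₊)⁻¹ : F(M) → F(M). Then F'(1) is an automorphism of F(M), hence extends to a functor F' : BZ → D with F'(*) = F(M) and F'(n) = F'(1)ⁿ, and there is a natural isomorphism η : F → F' ∘ L with components η_M = id, η_{M₊} = F(i₊), η_{M_h} = F(i₊) ∘ F(j₊)⁻¹, η_{M₋} = F(i₊) ∘ F(j₊)⁻¹ ∘ F(j₋). -/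
/-!
STATEMENT 2: Let `D` be a category and `F : C ⥤ D` a functor from the zig-zag category `C`
sending every morphism to an isomorphism.  Define
`F'(1) := F(i₋) ∘ F(j₋)⁻¹ ∘ F(j₊) ∘ F(i₊)⁻¹ : F(M) → F(M)`.  Then `F'(1)` is an automorphism
of `F(M)`, hence extends to a functor `F' : BZ ⥤ D` with `F'(*) = F(M)` and `F'(n) = F'(1)ⁿ`,
and there is a natural isomorphism `η : F ≅ F' ∘ L` with components `η_M = id`,
`η_{M₊} = F(i₊)`, `η_{M_h} = F(i₊) ∘ F(j₊)⁻¹`, `η_{M₋} = F(i₊) ∘ F(j₊)⁻¹ ∘ F(j₋)`.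
-/

open CategoryTheory

/-- The objects of the zig-zag category. -/
def objM : ZZCat := (Paths.of ZZObj).obj ZZObj.M
def objMp : ZZCat := (Paths.of ZZObj).obj ZZObj.Mp
def objMm : ZZCat := (Paths.of ZZObj).obj ZZObj.Mm
def objMh : ZZCat := (Paths.of ZZObj).obj ZZObj.Mh

/-- The generating morphisms of the zig-zag category. -/
def ipP : objMp ⟶ objM := (Paths.of ZZObj).map ZZArr.ip
def imP : objMm ⟶ objM := (Paths.of ZZObj).map ZZArr.im
def jpP : objMp ⟶ objMh := (Paths.of ZZObj).map ZZArr.jp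
def jmP : objMm ⟶ objMh := (Paths.of ZZObj).map ZZArr.jm

/-- `n`-th power in the monoid of endomorphisms of an object. -/
def endPow {D : Type u} [Category.{v} D] {X : D} (f : End X) (n : ℕ) : End X := f ^ n

/-!
Since `F` inverts every arrow, walking once around the zig-zag `M ← M₊ → M_h ← M₋ → M` gives an
automorphism `F'(1)` of `F(M)`, and `BZ` is free on one generator, so `n ↦ F'(1)ⁿ` is a functor
`F'`. The component of `η` at an object transports it to `F(M)` along the zig-zag through `M₊`.
Naturality along `i₊`, `j₊`, `j₋` holds by construction, where `L` is trivial, and along `i₋` it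
says exactly that `F(i₋)` equals the transport from `M₋` followed by the loop `F'(1) = F'(L(i₋))`.
-/

namespace CategoryTheory.Aut

variable {C : Type*} [Category* C] {X : C}

def zpowersFunctor (u : Aut X) : SingleObj (Multiplicative ℤ) ⥤ C :=
  SingleObj.functor ((Aut.toEnd X).comp (zpowersHom (Aut X) u))

variable (u : Aut X)

@[simp]
theorem zpowersFunctor_obj (x : SingleObj (Multiplicative ℤ)) : (zpowersFunctor u).obj x = X :=
  rfl

theorem zpowersFunctor_map_ofAdd (n : ℤ) :
    (zpowersFunctor u).map (X := SingleObj.star _) (Y := SingleObj.star _)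
      (Multiplicative.ofAdd n) = (u ^ n).hom :=
  rfl

theorem zpowersFunctor_map_ofAdd_zero :
    (zpowersFunctor u).map (X := SingleObj.star _) (Y := SingleObj.star _)
      (Multiplicative.ofAdd 0) = 𝟙 X := by
  rw [zpowersFunctor_map_ofAdd, zpow_zero]
  rfl

theorem zpowersFunctor_map_ofAdd_one :
    (zpowersFunctor u).map (X := SingleObj.star _) (Y := SingleObj.star _)
      (Multiplicative.ofAdd 1) = u.hom := by
  rw [zpowersFunctor_map_ofAdd, zpow_one]

theorem inv_zpowersFunctor_map_ofAdd_one :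
    inv ((zpowersFunctor u).map (X := SingleObj.star _) (Y := SingleObj.star _)
      (Multiplicative.ofAdd 1)) = u.inv :=
  IsIso.inv_eq_of_hom_inv_id (by rw [zpowersFunctor_map_ofAdd_one]; exact u.hom_inv_id)

theorem zpowersFunctor_map_ofAdd_natCast (n : ℕ) :
    (zpowersFunctor u).map (X := SingleObj.star _) (Y := SingleObj.star _)
      (Multiplicative.ofAdd (n : ℤ)) = Aut.toEnd X u ^ n := by
  rw [zpowersFunctor_map_ofAdd, zpow_natCast]
  exact map_pow (Aut.toEnd X) u n

theorem zpowersFunctor_map_ofAdd_neg_natCast (n : ℕ) :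
    (zpowersFunctor u).map (X := SingleObj.star _) (Y := SingleObj.star _)
      (Multiplicative.ofAdd (-(n : ℤ))) = Aut.toEnd X u⁻¹ ^ n := by
  rw [zpowersFunctor_map_ofAdd, zpow_neg, zpow_natCast, ← inv_pow]
  exact map_pow (Aut.toEnd X) u⁻¹ n

end CategoryTheory.Aut

section Zigzag

theorem Lzz_map_toPath {a b : ZZObj} (e : a ⟶ b) :
    Lzz.map e.toPath = Multiplicative.ofAdd (ZZArr.toInt e) :=
  Paths.lift_toPath _ e

variable {D : Type*} [Category* D] (F : ZZCat ⥤ D)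
  [IsIso (F.map ipP)] [IsIso (F.map jpP)] [IsIso (F.map jmP)]

noncomputable def zigzagComponent : (v : ZZObj) → (F.obj v ≅ F.obj objM)
  | .M => Iso.refl _
  | .Mp => (asIso (F.map ipP) : F.obj objMp ≅ _)
  | .Mh => (asIso (F.map jpP)).symm ≪≫ (asIso (F.map ipP) : F.obj objMp ≅ _)
  | .Mm => (asIso (F.map jmP) : F.obj objMm ≅ _) ≪≫ (asIso (F.map jpP)).symm ≪≫ asIso (F.map ipP)

variable [IsIso (F.map imP)]

noncomputable def zigzagMonodromy : Aut (F.obj objM) :=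
  (asIso (F.map ipP)).symm ≪≫ asIso (F.map jpP) ≪≫ (asIso (F.map jmP)).symm ≪≫ asIso (F.map imP)

theorem zigzagMonodromy_hom :
    (zigzagMonodromy F).hom = inv (F.map ipP) ≫ F.map jpP ≫ inv (F.map jmP) ≫ F.map imP :=
  rfl

theorem zigzagComponent_naturality {a b : ZZObj} (e : a ⟶ b) :
    F.map e.toPath ≫ (zigzagComponent F b).hom =
      (zigzagComponent F a).hom ≫
        (zigzagMonodromy F).zpowersFunctor.map (X := SingleObj.star _) (Y := SingleObj.star _)
          (Multiplicative.ofAdd (ZZArr.toInt e)) := by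
  change ZZArr _ _ at e
  cases e <;> simp only [ZZArr.toInt]
  case ip =>
    change F.map ipP ≫ 𝟙 _ = F.map ipP ≫ _
    rw [Aut.zpowersFunctor_map_ofAdd_zero]
  case jp =>
    change F.map jpP ≫ inv (F.map jpP) ≫ F.map ipP = F.map ipP ≫ _
    rw [Aut.zpowersFunctor_map_ofAdd_zero, IsIso.hom_inv_id_assoc, Category.comp_id]
  case jm =>
    change F.map jmP ≫ inv (F.map jpP) ≫ F.map ipP =
      (F.map jmP ≫ inv (F.map jpP) ≫ F.map ipP) ≫ _
    rw [Aut.zpowersFunctor_map_ofAdd_zero, Category.comp_id]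
  case im =>
    change F.map imP ≫ 𝟙 _ = (F.map jmP ≫ inv (F.map jpP) ≫ F.map ipP) ≫ _
    simp [Aut.zpowersFunctor_map_ofAdd_one, zigzagMonodromy_hom]

noncomputable def zigzagIso : F ≅ Lzz ⋙ (zigzagMonodromy F).zpowersFunctor :=
  Paths.liftNatIso (zigzagComponent F) fun e => by
    change _ = _ ≫ (zigzagMonodromy F).zpowersFunctor.map (Lzz.map e.toPath)
    rw [Lzz_map_toPath]
    exact zigzagComponent_naturality F e

end Zigzag

theorem functor_inverting_all_extends_to_BZ
    (D : Type u) [Category.{v} D] (F : ZZCat ⥤ D)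
    (hF : ∀ {a b : ZZCat} (f : a ⟶ b), IsIso (F.map f)) :
    ∃ (F' : SingleObj (Multiplicative ℤ) ⥤ D)
      (h : F'.obj (SingleObj.star (Multiplicative ℤ)) = F.obj objM),
      -- F'(1) is the composite F(i₋) ∘ F(j₋)⁻¹ ∘ F(j₊) ∘ F(i₊)⁻¹ : F(M) → F(M)
      (F'.map (Multiplicative.ofAdd (1 : ℤ)) =
        eqToHom h ≫ (haveI := hF ipP; inv (F.map ipP)) ≫ F.map jpP ≫
          (haveI := hF jmP; inv (F.map jmP)) ≫ F.map imP ≫ eqToHom h.symm) ∧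
      -- F'(n) = F'(1)ⁿ for all n ∈ ℤ (stated for n ∈ ℕ and its negative, using the
      -- monoid of endomorphisms of F'(*))
      (∀ n : ℕ, F'.map (X := SingleObj.star (Multiplicative ℤ)) (Y := SingleObj.star (Multiplicative ℤ)) (Multiplicative.ofAdd (n : ℤ)) =
        endPow (F'.map (X := SingleObj.star (Multiplicative ℤ)) (Y := SingleObj.star (Multiplicative ℤ)) (Multiplicative.ofAdd (1 : ℤ))) n) ∧
      (∀ n : ℕ, F'.map (X := SingleObj.star (Multiplicative ℤ)) (Y := SingleObj.star (Multiplicative ℤ)) (Multiplicative.ofAdd (-(n : ℤ))) =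
        endPow (inv (F'.map (X := SingleObj.star (Multiplicative ℤ)) (Y := SingleObj.star (Multiplicative ℤ)) (Multiplicative.ofAdd (1 : ℤ)))) n) ∧
      -- the natural isomorphism η : F ≅ F' ∘ L, with the stated components
      ∃ η : F ≅ Lzz ⋙ F',
        (η.hom.app objM = eqToHom h.symm) ∧
        (η.hom.app objMp = F.map ipP ≫ eqToHom h.symm) ∧
        (η.hom.app objMh =
          (haveI := hF jpP; inv (F.map jpP)) ≫ F.map ipP ≫ eqToHom h.symm) ∧
        (η.hom.app objMm =
          F.map jmP ≫ (haveI := hF jpP; inv (F.map jpP)) ≫ F.map ipP ≫ eqToHom h.symm) := by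
  have := hF ipP; have := hF imP; have := hF jpP; have := hF jmP
  refine ⟨(zigzagMonodromy F).zpowersFunctor, rfl, ?_, ?_, ?_, zigzagIso F, rfl, ?_, ?_, ?_⟩
  · simp [Aut.zpowersFunctor_map_ofAdd_one, zigzagMonodromy_hom]
  · intro n
    rw [endPow, Aut.zpowersFunctor_map_ofAdd_one]
    exact Aut.zpowersFunctor_map_ofAdd_natCast _ n
  · intro n
    simp only [endPow, Aut.inv_zpowersFunctor_map_ofAdd_one]
    exact Aut.zpowersFunctor_map_ofAdd_neg_natCast _ n
  -- As `h` is `rfl`, each `eqToHom h.symm` below unfolds to `𝟙 (F.obj objM)`.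
  · exact (Category.comp_id _).symm
  · exact inv (F.map jpP) ≫= (Category.comp_id _).symm
  · exact F.map jmP ≫= inv (F.map jpP) ≫= (Category.comp_id _).symm
end
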